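/- Let D be a digraph, let W2 be the 2-wheel with centre c and rim consisting of vertices a, b (i.e., W2 consists of the directed 2-cycle ab, ba together with arcs ca and cb), and let b', c' be vertices of D. Let S be the strong component of b' in D - c'. Then D contains a W2-subdivision with b-vertex b' and c-vertex c' if and only if there exist distinct vertices x1, x2 in V(S) such that there are two independent (c', {x1, x2})-dipaths in D - (V(S) \ {x1, x2}) and two independent ({x1, x2}, b')-dipaths in S. -/

import Mathlib

open List

variable {V : Type*}

/-- The interior (internal vertices) of a path given as a list of vertices. -/
def interiorL (l : List V) : List V := l.tail.dropLast

/-- `l` is a directed path (dipath) in the digraph `D`. -/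
def IsDipath (D : V → V → Prop) (l : List V) : Prop :=
  l ≠ [] ∧ l.Chain' D ∧ l.Nodup

/-- `l` is a dipath from `x` to `y` in `D`. -/
def DipathFromTo (D : V → V → Prop) (l : List V) (x y : V) : Prop :=
  IsDipath D l ∧ l.head? = some x ∧ l.getLast? = some y

/-- `l` is a directed cycle in `D` (length at least 2, digraphs being strict). -/
def IsDicycle (D : V → V → Prop) (l : List V) : Prop :=
  2 ≤ l.length ∧ l.Nodup ∧ l.Chain' D ∧ ∃ a ∈ l.getLast?, ∃ b ∈ l.head?, D a b

/-- The restriction (induced subdigraph) of `D` to the vertex set `A`. -/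
def restrict (D : V → V → Prop) (A : Set V) : V → V → Prop :=
  fun u v => D u v ∧ u ∈ A ∧ v ∈ A

/-- Reachability by a dipath inside the vertex set `A`. -/
def ReachIn (D : V → V → Prop) (A : Set V) : V → V → Prop :=
  Relation.ReflTransGen (restrict D A)

/-- Reachability by a dipath. -/
def Reach (D : V → V → Prop) : V → V → Prop := Relation.ReflTransGen D

/-- `x` appears strictly before `y` along the list `l`. -/
def Before (l : List V) (x y : V) : Prop :=
  ∃ i j : ℕ, i < j ∧ l[i]? = some x ∧ l[j]? = some y

/-- `x` and `y` are consecutive (in this order) in `l`. -/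
def ConsecIn (l : List V) (x y : V) : Prop :=
  ∃ i : ℕ, l[i]? = some x ∧ l[i + 1]? = some y

/-- `D` contains a subdivision of `F`, realized by the branch-vertex map `branch` and,
for every arc `uv` of `F`, the dipath `P u v` from `branch u` to `branch v`;
the paths have length at least one and are internally disjoint from each other
and from the branch vertices. -/
def IsSubdivisionIn {W : Type*} (F : W → W → Prop) (D : V → V → Prop)
    (branch : W → V) (P : W → W → List V) : Prop :=
  Function.Injective branch ∧
  (∀ u v : W, F u v →
    DipathFromTo D (P u v) (branch u) (branch v) ∧ 2 ≤ (P u v).length) ∧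
  (∀ u v : W, F u v → ∀ x ∈ interiorL (P u v), ∀ w : W, x ≠ branch w) ∧
  (∀ u v u' v' : W, F u v → F u' v' → (u, v) ≠ (u', v') →
    ∀ x ∈ interiorL (P u v), x ∉ interiorL (P u' v'))

/-- `D` contains a subdivision of `F`. -/
def ContainsSubdivision {W : Type*} (F : W → W → Prop) (D : V → V → Prop) : Prop :=
  ∃ (branch : W → V) (P : W → W → List V), IsSubdivisionIn F D branch P

/-- The 2-wheel `W₂` with rim `a = 0`, `b = 1` and centre `c = 2`:
arcs `ab`, `ba`, `ca`, `cb`. -/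
def W2 : Fin 3 → Fin 3 → Prop := fun u v =>
  (u, v) ∈ ([(0, 1), (1, 0), (2, 0), (2, 1)] : List (Fin 3 × Fin 3))

/-- The strong component of `b'` in `D - c'`. -/
def SComp (D : V → V → Prop) (b' c' : V) : Set V :=
  {v | ReachIn D {x | x ≠ c'} b' v ∧ ReachIn D {x | x ≠ c'} v b'}

/-!
In a `W₂`-subdivision the rim cycle through the `a`-vertex and `b'` avoids the centre `c'`, so it
lies in the strong component `S` of `b'` in `D - c'`. The two spokes start at `c' ∉ S`; cutting
each at its first vertex in `S` gives `x1 ≠ x2` and the fans `Q1`, `Q2`, while the rest of the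
`a`-spoke, continued along the rim to `b'`, and the rest of the `b'`-spoke give `R1`, `R2`.
Conversely, given the fans, follow a path inside `S` from `b'` to its first vertex `y ≠ b'` on
`R1 ∪ R2`, say on `R1`. With `y` as the `a`-vertex, the rim consists of that path and `R1` from
`y` on, and the spokes are `Q1` followed by `R1` up to `y`, and `Q2` followed by `R2`.
-/

theorem interiorL_subset (l : List V) : interiorL l ⊆ l :=
  fun _ hz => List.mem_of_mem_tail (List.dropLast_subset _ hz)

namespace DipathFromTo

variable {D : V → V → Prop} {A : Set V} {l l₁ l₂ : List V} {x y z : V}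

theorem ne_nil (h : DipathFromTo D l x y) : l ≠ [] := h.1.1

theorem nodup (h : DipathFromTo D l x y) : l.Nodup := h.1.2.2

theorem head_mem (h : DipathFromTo D l x y) : x ∈ l :=
  List.mem_of_mem_head? h.2.1

theorem getLast_mem (h : DipathFromTo D l x y) : y ∈ l :=
  List.mem_of_mem_getLast? h.2.2

theorem eq_cons (h : DipathFromTo D l x y) : l = x :: l.tail := by
  cases l with
  | nil => exact absurd rfl h.ne_nil
  | cons a t => rw [Option.some_inj.mp h.2.1]; rfl

theorem singleton (x : V) : DipathFromTo D [x] x x :=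
  ⟨⟨List.cons_ne_nil _ _, List.isChain_singleton _, List.nodup_singleton _⟩, rfl, rfl⟩

theorem eq_of_singleton (h : DipathFromTo D [z] x y) : x = z ∧ y = z := by
  simpa [DipathFromTo, eq_comm] using h.2

theorem cons_cons_iff {a b : V} {t : List V} :
    DipathFromTo D (a :: b :: t) x y ↔
      x = a ∧ D a b ∧ a ∉ b :: t ∧ DipathFromTo D (b :: t) b y := by
  rw [DipathFromTo, List.getLast?_cons_cons]
  constructor
  · rintro ⟨⟨-, hc, hnd⟩, hx, hy⟩
    obtain ⟨hab, hc⟩ := List.isChain_cons_cons.1 hc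
    obtain ⟨ha, hnd⟩ := List.nodup_cons.1 hnd
    exact ⟨(Option.some_inj.1 hx).symm, hab, ha, ⟨List.cons_ne_nil _ _, hc, hnd⟩, rfl, hy⟩
  · rintro ⟨rfl, hab, ha, ⟨-, hc, hnd⟩, -, hy⟩
    exact ⟨⟨List.cons_ne_nil _ _, List.isChain_cons_cons.2 ⟨hab, hc⟩, List.nodup_cons.2 ⟨ha, hnd⟩⟩,
      rfl, hy⟩

theorem cons {a : V} (ha : D a x) (hal : a ∉ l) (h : DipathFromTo D l x y) :
    DipathFromTo D (a :: l) a y := by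
  have e := h.eq_cons
  rw [e] at hal h ⊢
  exact cons_cons_iff.2 ⟨rfl, ha, hal, h⟩

theorem append (h₁ : DipathFromTo D l₁ x y) (h₂ : DipathFromTo D l₂ y z)
    (hmeet : ∀ w ∈ l₁, w ∈ l₂ → w = y) : DipathFromTo D (l₁ ++ l₂.tail) x z := by
  induction l₁ generalizing x with
  | nil => exact absurd rfl h₁.ne_nil
  | cons a t ih =>
    cases t with
    | nil =>
      obtain ⟨rfl, rfl⟩ := eq_of_singleton h₁
      rwa [List.singleton_append, ← h₂.eq_cons]
    | cons b t =>
      obtain ⟨rfl, hab, hat, ht⟩ := cons_cons_iff.1 h₁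
      refine (ih ht fun w hw => hmeet w (List.mem_cons_of_mem _ hw)).cons hab ?_
      rintro hx
      rcases List.mem_append.1 hx with hx | hx
      · exact hat hx
      · exact hat (hmeet x List.mem_cons_self (List.mem_of_mem_tail hx) ▸ ht.getLast_mem)

theorem exists_split_first {p : V → Prop} (h : DipathFromTo D l x y) (hp : ∃ z ∈ l, p z) :
    ∃ v l₁ l₂, p v ∧ DipathFromTo D l₁ x v ∧ DipathFromTo D l₂ v y ∧ l₁ <+: l ∧ l₂ <:+ l ∧
      (∀ z ∈ l₁, z ∈ l₂ → z = v) ∧ ∀ z ∈ l₁, p z → z = v := by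
  induction l generalizing x with
  | nil => exact absurd rfl h.ne_nil
  | cons a t ih =>
    have hxa : x = a := (Option.some_inj.mp h.2.1).symm
    subst hxa
    by_cases hpx : p x
    · refine ⟨x, [x], x :: t, hpx, singleton x, h, List.prefix_cons_inj _ |>.2 t.nil_prefix,
        List.suffix_refl _, fun z hz _ => List.mem_singleton.1 hz,
        fun z hz _ => List.mem_singleton.1 hz⟩
    cases t with
    | nil => simp_all
    | cons b t =>
      obtain ⟨-, hxb, hxt, ht⟩ := cons_cons_iff.1 h
      have hpt : ∃ z ∈ b :: t, p z := by
        obtain ⟨z, hz, hpz⟩ := hp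
        exact ⟨z, (List.mem_cons.1 hz).resolve_left (by rintro rfl; exact hpx hpz), hpz⟩
      obtain ⟨v, l₁, l₂, hpv, h₁, h₂, hpre, hsuf, hmeet, hfirst⟩ := ih ht hpt
      refine ⟨v, x :: l₁, l₂, hpv, h₁.cons hxb (fun hx => hxt (hpre.subset hx)), h₂,
        List.prefix_cons_inj _ |>.2 hpre, hsuf.trans (List.suffix_cons _ _), ?_, ?_⟩
      · rintro z (_ | ⟨_, hz⟩) hz₂
        · exact absurd (hsuf.subset hz₂) hxt
        · exact hmeet z hz hz₂
      · rintro z (_ | ⟨_, hz⟩) hpz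
        · exact absurd hpz hpx
        · exact hfirst z hz hpz

theorem exists_split (h : DipathFromTo D l x y) (hz : z ∈ l) :
    ∃ l₁ l₂, DipathFromTo D l₁ x z ∧ DipathFromTo D l₂ z y ∧ l₁ <+: l ∧ l₂ <:+ l ∧
      ∀ w ∈ l₁, w ∈ l₂ → w = z := by
  obtain ⟨_, l₁, l₂, rfl, h₁, h₂, hpre, hsuf, hmeet, -⟩ := h.exists_split_first ⟨z, hz, rfl⟩
  exact ⟨l₁, l₂, h₁, h₂, hpre, hsuf, hmeet⟩

theorem two_le_length (h : DipathFromTo D l x y) (hxy : x ≠ y) : 2 ≤ l.length := by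
  match l, h with
  | [], h => exact absurd rfl h.ne_nil
  | [_], h => exact absurd ((eq_of_singleton h).1.trans (eq_of_singleton h).2.symm) hxy
  | _ :: _ :: _, _ => simp

theorem mem_interiorL_iff (h : DipathFromTo D l x y) :
    z ∈ interiorL l ↔ z ∈ l ∧ z ≠ x ∧ z ≠ y := by
  have e := h.eq_cons
  rcases List.eq_nil_or_concat' l.tail with ht | ⟨m, w, ht⟩
  · rw [ht] at e
    subst e
    obtain ⟨-, rfl⟩ := eq_of_singleton h
    simp [interiorL]
  · rw [ht] at e
    subst e
    have hwy : w = y := by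
      have hy := h.2.2
      rw [← List.cons_append, List.getLast?_concat] at hy
      exact Option.some_inj.mp hy
    subst hwy
    have hnd := h.nodup
    simp only [List.nodup_cons, List.nodup_append, List.mem_append, List.mem_singleton] at hnd
    simp only [interiorL, List.tail_cons, List.dropLast_concat, List.mem_cons, List.mem_append]
    grind

theorem reflTransGen (h : DipathFromTo D l x y) : Relation.ReflTransGen D x y := by
  have e := h.eq_cons
  rw [e] at h
  exact List.relationReflTransGen_of_exists_isChain_cons _ h.1.2.1
    (Option.some_inj.mp ((List.getLast?_eq_some_getLast _).symm.trans h.2.2))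

theorem of_restrict (h : DipathFromTo (restrict D A) l x y) : DipathFromTo D l x y :=
  ⟨⟨h.ne_nil, h.1.2.1.imp fun _ _ huv => huv.1, h.nodup⟩, h.2⟩

theorem restrict (h : DipathFromTo D l x y) (hA : ∀ z ∈ l, z ∈ A) :
    DipathFromTo (_root_.restrict D A) l x y :=
  ⟨⟨h.ne_nil, h.1.2.1.imp_of_mem_imp fun _ _ hu hv huv => ⟨huv, hA _ hu, hA _ hv⟩, h.nodup⟩, h.2⟩

theorem forall_mem_of_restrict (h : DipathFromTo (_root_.restrict D A) l x y) (hx : x ∈ A) :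
    ∀ z ∈ l, z ∈ A :=
  h.1.2.1.induction _ _ (fun _ _ huv _ => huv.2.2) fun hl => by
    rwa [Option.some_inj.mp ((List.head?_eq_some_head hl).symm.trans h.2.1)]

theorem reachIn (h : DipathFromTo D l x y) (hA : ∀ z ∈ l, z ∈ A) : ReachIn D A x y :=
  (h.restrict hA).reflTransGen

end DipathFromTo

theorem exists_dipathFromTo_of_reflTransGen {D : V → V → Prop} {x y : V}
    (h : Relation.ReflTransGen D x y) : ∃ l, DipathFromTo D l x y := by
  induction h using Relation.ReflTransGen.head_induction_on with
  | refl => exact ⟨_, .singleton y⟩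
  | @head a b hab _ ih =>
    obtain ⟨l, hl⟩ := ih
    by_cases ha : a ∈ l
    · obtain ⟨-, l₂, -, h₂, -⟩ := hl.exists_split ha
      exact ⟨l₂, h₂⟩
    · exact ⟨a :: l, hl.cons hab ha⟩

section StrongComponent

variable {D : V → V → Prop} {b' c' u v z : V}

theorem self_mem_sComp : b' ∈ SComp D b' c' := ⟨.refl, .refl⟩

theorem notMem_sComp_of_ne (hbc : b' ≠ c') : c' ∉ SComp D b' c' := fun hc => by
  rcases hc.1.cases_tail with hcb | ⟨_, -, hc⟩
  · exact hbc hcb.symm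
  · exact hc.2.2 rfl

theorem mem_sComp_of_reachIn (hu : u ∈ SComp D b' c') (hv : v ∈ SComp D b' c')
    (huz : ReachIn D {x | x ≠ c'} u z) (hzv : ReachIn D {x | x ≠ c'} z v) : z ∈ SComp D b' c' :=
  ⟨hu.1.trans huz, hzv.trans hv.2⟩

theorem reachIn_sComp (hu : u ∈ SComp D b' c') (hv : v ∈ SComp D b' c') :
    ReachIn D (SComp D b' c') u v := by
  have huv : ReachIn D {x | x ≠ c'} u v := hu.2.trans hv.1
  induction huv using Relation.ReflTransGen.head_induction_on with
  | refl => exact .refl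
  | @head a w haw hwv ih =>
    have hw : w ∈ SComp D b' c' := mem_sComp_of_reachIn hu hv (.single haw) hwv
    exact .head ⟨haw.1, hu, hw⟩ (ih hw)

theorem DipathFromTo.forall_mem_sComp {l : List V} (h : DipathFromTo D l u v) (hc : c' ∉ l)
    (hu : u ∈ SComp D b' c') (hv : v ∈ SComp D b' c') : ∀ z ∈ l, z ∈ SComp D b' c' := by
  intro z hz
  obtain ⟨l₁, l₂, h₁, h₂, hpre, hsuf, -⟩ := h.exists_split hz
  have havoid : ∀ l', l' ⊆ l → ∀ w ∈ l', w ∈ {x | x ≠ c'} := fun l' hl' w hw hwc =>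
    hc (hwc ▸ hl' hw)
  exact mem_sComp_of_reachIn hu hv (h₁.reachIn (havoid _ hpre.subset))
    (h₂.reachIn (havoid _ hsuf.subset))

end StrongComponent

namespace IsSubdivisionIn

variable {W : Type*} {F : W → W → Prop} {D : V → V → Prop} {branch : W → V}
  {P : W → W → List V} {u v u' v' : W} {z : V}

theorem dipathFromTo (h : IsSubdivisionIn F D branch P) (huv : F u v) :
    DipathFromTo D (P u v) (branch u) (branch v) :=
  (h.2.1 u v huv).1

theorem exists_eq_branch_of_notMem_interiorL (h : IsSubdivisionIn F D branch P) (huv : F u v)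
    (hz : z ∈ P u v) (hzi : z ∉ interiorL (P u v)) : ∃ w, z = branch w ∧ (w = u ∨ w = v) := by
  by_cases hzu : z = branch u
  · exact ⟨u, hzu, .inl rfl⟩
  by_cases hzv : z = branch v
  · exact ⟨v, hzv, .inr rfl⟩
  exact absurd ((h.dipathFromTo huv).mem_interiorL_iff.2 ⟨hz, hzu, hzv⟩) hzi

theorem notMem_of_mem_interiorL (h : IsSubdivisionIn F D branch P) (huv : F u v)
    (huv' : F u' v') (hne : (u, v) ≠ (u', v')) (hzi : z ∈ interiorL (P u v)) : z ∉ P u' v' := by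
  intro hz'
  by_cases hzi' : z ∈ interiorL (P u' v')
  · exact h.2.2.2 u v u' v' huv huv' hne z hzi hzi'
  · obtain ⟨w, rfl, -⟩ := h.exists_eq_branch_of_notMem_interiorL huv' hz' hzi'
    exact h.2.2.1 u v huv _ hzi w rfl

theorem exists_eq_branch_of_mem_of_mem (h : IsSubdivisionIn F D branch P) (huv : F u v)
    (huv' : F u' v') (hne : (u, v) ≠ (u', v')) (hz : z ∈ P u v) (hz' : z ∈ P u' v') :
    ∃ w, z = branch w ∧ (w = u ∨ w = v) ∧ (w = u' ∨ w = v') := by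
  obtain ⟨w, rfl, hw⟩ := h.exists_eq_branch_of_notMem_interiorL huv hz
    fun hi => h.notMem_of_mem_interiorL huv huv' hne hi hz'
  obtain ⟨w', hww', hw'⟩ := h.exists_eq_branch_of_notMem_interiorL huv' hz'
    fun hi => h.notMem_of_mem_interiorL huv' huv (Ne.symm hne) hi hz
  exact ⟨w, rfl, hw, h.1 hww' ▸ hw'⟩

end IsSubdivisionIn

theorem isSubdivisionIn_of_dipathFromTo {W : Type*} {F : W → W → Prop} {D : V → V → Prop}
    {branch : W → V} {P : W → W → List V} (hinj : Function.Injective branch)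
    (hirrefl : ∀ u v, F u v → u ≠ v)
    (hpath : ∀ u v, F u v → DipathFromTo D (P u v) (branch u) (branch v))
    (hbranch : ∀ u v w, F u v → branch w ∈ P u v → w = u ∨ w = v)
    (hmeet : ∀ u v u' v', F u v → F u' v' → (u, v) ≠ (u', v') →
      ∀ z ∈ P u v, z ∈ P u' v' → z ∈ Set.range branch) :
    IsSubdivisionIn F D branch P := by
  have hinterior : ∀ u v, F u v → ∀ z ∈ interiorL (P u v), ∀ w, z ≠ branch w := by
    rintro u v huv z hz w rfl
    obtain ⟨hw, hwu, hwv⟩ := (hpath u v huv).mem_interiorL_iff.1 hz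
    rcases hbranch u v w huv hw with rfl | rfl
    exacts [hwu rfl, hwv rfl]
  refine ⟨hinj, fun u v huv => ⟨hpath u v huv, ?_⟩, hinterior, ?_⟩
  · exact (hpath u v huv).two_le_length (hinj.ne (hirrefl u v huv))
  · intro u v u' v' huv huv' hne z hz hz'
    obtain ⟨w, rfl⟩ := hmeet u v u' v' huv huv' hne z (interiorL_subset _ hz)
      (interiorL_subset _ hz')
    exact hinterior u v huv _ hz w rfl

instance : DecidableRel W2 := fun u v => by unfold W2; infer_instance

theorem W2_cases {u v : Fin 3} (h : W2 u v) :
    (u = 0 ∧ v = 1) ∨ (u = 1 ∧ v = 0) ∨ (u = 2 ∧ v = 0) ∨ (u = 2 ∧ v = 1) := by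
  revert u v; decide

theorem W2_ne {u v : Fin 3} (h : W2 u v) : u ≠ v := by
  revert u v; decide

structure IsW2Paths (D : V → V → Prop) (a b c : V) (pab pba pca pcb : List V) : Prop where
  ne_ab : a ≠ b
  ne_ac : a ≠ c
  ne_bc : b ≠ c
  dipath_ab : DipathFromTo D pab a b
  dipath_ba : DipathFromTo D pba b a
  dipath_ca : DipathFromTo D pca c a
  dipath_cb : DipathFromTo D pcb c b
  meet_ab_ba : ∀ z ∈ pab, z ∈ pba → z = a ∨ z = b
  meet_ab_ca : ∀ z ∈ pab, z ∈ pca → z = a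
  meet_ab_cb : ∀ z ∈ pab, z ∈ pcb → z = b
  meet_ba_ca : ∀ z ∈ pba, z ∈ pca → z = a
  meet_ba_cb : ∀ z ∈ pba, z ∈ pcb → z = b
  meet_ca_cb : ∀ z ∈ pca, z ∈ pcb → z = c

namespace IsW2Paths

variable {D : V → V → Prop} {a b c : V} {pab pba pca pcb : List V}

theorem c_notMem_ab (p : IsW2Paths D a b c pab pba pca pcb) : c ∉ pab :=
  fun hc => p.ne_bc (p.meet_ab_cb c hc p.dipath_cb.head_mem).symm

theorem c_notMem_ba (p : IsW2Paths D a b c pab pba pca pcb) : c ∉ pba :=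
  fun hc => p.ne_ac (p.meet_ba_ca c hc p.dipath_ca.head_mem).symm

theorem b_notMem_ca (p : IsW2Paths D a b c pab pba pca pcb) : b ∉ pca :=
  fun hb => p.ne_ab (p.meet_ab_ca b p.dipath_ab.getLast_mem hb).symm

theorem a_notMem_cb (p : IsW2Paths D a b c pab pba pca pcb) : a ∉ pcb :=
  fun ha => p.ne_ab (p.meet_ab_cb a p.dipath_ab.head_mem ha)

theorem isSubdivisionIn (p : IsW2Paths D a b c pab pba pca pcb) :
    IsSubdivisionIn W2 D ![a, b, c] ![![[], pab, []], ![pba, [], []], ![pca, pcb, []]] := by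
  refine isSubdivisionIn_of_dipathFromTo ?_ (fun _ _ => W2_ne) ?_ ?_ ?_
  · intro i j hij
    fin_cases i <;> fin_cases j <;>
      simp_all [p.ne_ab, p.ne_ac, p.ne_bc, p.ne_ab.symm, p.ne_ac.symm, p.ne_bc.symm]
  · intro u v huv
    rcases W2_cases huv with ⟨rfl, rfl⟩ | ⟨rfl, rfl⟩ | ⟨rfl, rfl⟩ | ⟨rfl, rfl⟩
    exacts [p.dipath_ab, p.dipath_ba, p.dipath_ca, p.dipath_cb]
  · intro u v w huv hw
    rcases W2_cases huv with ⟨rfl, rfl⟩ | ⟨rfl, rfl⟩ | ⟨rfl, rfl⟩ | ⟨rfl, rfl⟩ <;>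
      fin_cases w <;> simp_all [p.c_notMem_ab, p.c_notMem_ba, p.b_notMem_ca, p.a_notMem_cb]
  · intro u v u' v' huv huv' hne z hz hz'
    have hrange : z = a ∨ z = b ∨ z = c → z ∈ Set.range ![a, b, c] := by
      rintro (rfl | rfl | rfl)
      exacts [⟨0, rfl⟩, ⟨1, rfl⟩, ⟨2, rfl⟩]
    refine hrange ?_
    rcases W2_cases huv with ⟨rfl, rfl⟩ | ⟨rfl, rfl⟩ | ⟨rfl, rfl⟩ | ⟨rfl, rfl⟩ <;>
      rcases W2_cases huv' with ⟨rfl, rfl⟩ | ⟨rfl, rfl⟩ | ⟨rfl, rfl⟩ | ⟨rfl, rfl⟩ <;>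
      simp only [Matrix.cons_val_zero, Matrix.cons_val_one, Matrix.cons_val_two, Matrix.head_cons,
        Matrix.tail_cons] at hz hz' hne <;>
      grind [p.meet_ab_ba, p.meet_ab_ca, p.meet_ab_cb, p.meet_ba_ca, p.meet_ba_cb, p.meet_ca_cb]

end IsW2Paths

theorem exists_W2_subdivision_iff {D : V → V → Prop} {b c : V} :
    (∃ branch P, IsSubdivisionIn W2 D branch P ∧ branch 1 = b ∧ branch 2 = c) ↔
      ∃ a pab pba pca pcb, IsW2Paths D a b c pab pba pca pcb := by
  refine ⟨?_, fun ⟨a, pab, pba, pca, pcb, p⟩ => ⟨_, _, p.isSubdivisionIn, rfl, rfl⟩⟩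
  rintro ⟨branch, P, h, rfl, rfl⟩
  refine ⟨branch 0, P 0 1, P 1 0, P 2 0, P 2 1, ⟨h.1.ne (by decide), h.1.ne (by decide),
    h.1.ne (by decide), h.dipathFromTo (by decide), h.dipathFromTo (by decide),
    h.dipathFromTo (by decide), h.dipathFromTo (by decide), ?_, ?_, ?_, ?_, ?_, ?_⟩⟩
  · intro z hz hz'
    obtain ⟨w, rfl, hw, -⟩ :=
      h.exists_eq_branch_of_mem_of_mem (by decide) (by decide) (by decide) hz hz'
    rcases hw with rfl | rfl <;> simp
  all_goals
    intro z hz hz'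
    obtain ⟨w, rfl, hw, hw'⟩ :=
      h.exists_eq_branch_of_mem_of_mem (by decide) (by decide) (by decide) hz hz'
    exact congrArg branch (by omega)

theorem IsW2Paths.exists_forced_linkage {D : V → V → Prop} {a b' c' : V}
    {pab pba pca pcb : List V} (p : IsW2Paths D a b' c' pab pba pca pcb) :
    ∃ x1 x2 : V, x1 ≠ x2 ∧ x1 ∈ SComp D b' c' ∧ x2 ∈ SComp D b' c' ∧
      (∃ Q1 Q2 : List V,
        DipathFromTo (restrict D ({v | v ∉ SComp D b' c'} ∪ {x1, x2})) Q1 c' x1 ∧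
        DipathFromTo (restrict D ({v | v ∉ SComp D b' c'} ∪ {x1, x2})) Q2 c' x2 ∧
        (∀ z, z ∈ Q1 → z ∈ Q2 → z = c')) ∧
      (∃ R1 R2 : List V,
        DipathFromTo (restrict D (SComp D b' c')) R1 x1 b' ∧
        DipathFromTo (restrict D (SComp D b' c')) R2 x2 b' ∧
        (∀ z, z ∈ R1 → z ∈ R2 → z = b')) := by
  set S := SComp D b' c'
  have hcS : c' ∉ S := notMem_sComp_of_ne p.ne_bc
  have hbS : b' ∈ S := self_mem_sComp
  have haS : a ∈ S := mem_sComp_of_reachIn hbS hbS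
    (p.dipath_ba.reachIn fun _ hz hzc => p.c_notMem_ba (hzc ▸ hz))
    (p.dipath_ab.reachIn fun _ hz hzc => p.c_notMem_ab (hzc ▸ hz))
  obtain ⟨x1, Q1, R1, hx1S, hQ1, hR1, hQ1pre, hR1suf, hQR1, hQ1S⟩ :=
    p.dipath_ca.exists_split_first (p := (· ∈ S)) ⟨a, p.dipath_ca.getLast_mem, haS⟩
  obtain ⟨x2, Q2, R2, hx2S, hQ2, hR2, hQ2pre, hR2suf, hQR2, hQ2S⟩ :=
    p.dipath_cb.exists_split_first (p := (· ∈ S)) ⟨b', p.dipath_cb.getLast_mem, hbS⟩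
  have hcR1 : c' ∉ R1 := fun hc => hcS (hQR1 c' hQ1.head_mem hc ▸ hx1S)
  have hcR2 : c' ∉ R2 := fun hc => hcS (hQR2 c' hQ2.head_mem hc ▸ hx2S)
  have hR1S : ∀ z ∈ R1 ++ pab.tail, z ∈ S := by
    intro z hz
    rcases List.mem_append.1 hz with hz | hz
    · exact hR1.forall_mem_sComp hcR1 hx1S haS z hz
    · exact p.dipath_ab.forall_mem_sComp p.c_notMem_ab haS hbS z (List.mem_of_mem_tail hz)
  have hR1' : DipathFromTo D (R1 ++ pab.tail) x1 b' :=
    hR1.append p.dipath_ab fun w hw hw' => p.meet_ab_ca w hw' (hR1suf.subset hw)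
  refine ⟨x1, x2, fun h => hcS ?_, hx1S, hx2S, ⟨Q1, Q2, hQ1.restrict ?_, hQ2.restrict ?_, ?_⟩,
    ⟨R1 ++ pab.tail, R2, hR1'.restrict hR1S, hR2.restrict (hR2.forall_mem_sComp hcR2 hx2S hbS), ?_⟩⟩
  · rw [← p.meet_ca_cb x1 (hQ1pre.subset hQ1.getLast_mem) (h ▸ hQ2pre.subset hQ2.getLast_mem)]
    exact hx1S
  · exact fun z hz => (em (z ∈ S)).elim (fun h => .inr (.inl (hQ1S z hz h))) .inl
  · exact fun z hz => (em (z ∈ S)).elim (fun h => .inr (.inr (hQ2S z hz h))) .inl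
  · exact fun z hz hz' => p.meet_ca_cb z (hQ1pre.subset hz) (hQ2pre.subset hz')
  · intro z hz hz'
    rcases List.mem_append.1 hz with hz | hz
    · exact absurd (p.meet_ca_cb z (hR1suf.subset hz) (hR2suf.subset hz') ▸ hz') hcR2
    · exact p.meet_ab_cb z (List.mem_of_mem_tail hz) (hR2suf.subset hz')

theorem exists_isW2Paths_of_linkage {D : V → V → Prop} {S : Set V} {b' c' x1 x2 y : V}
    {Q1 Q2 R1 R2 T : List V} (hcS : c' ∉ S)
    (hQ1 : DipathFromTo D Q1 c' x1) (hQ2 : DipathFromTo D Q2 c' x2)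
    (hQ1S : ∀ z ∈ Q1, z ∈ S → z = x1) (hQ2S : ∀ z ∈ Q2, z ∈ S → z = x2)
    (hQQ : ∀ z ∈ Q1, z ∈ Q2 → z = c')
    (hR1 : DipathFromTo D R1 x1 b') (hR2 : DipathFromTo D R2 x2 b')
    (hR1S : ∀ z ∈ R1, z ∈ S) (hR2S : ∀ z ∈ R2, z ∈ S) (hRR : ∀ z ∈ R1, z ∈ R2 → z = b')
    (hT : DipathFromTo D T b' y) (hTS : ∀ z ∈ T, z ∈ S) (hyR1 : y ∈ R1) (hyb : y ≠ b')
    (hTR : ∀ z ∈ T, (z ∈ R1 ∨ z ∈ R2) ∧ z ≠ b' → z = y) :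
    ∃ pab pba pca pcb, IsW2Paths D y b' c' pab pba pca pcb := by
  obtain ⟨R1pre, R1suf, hpre, hsuf, hpreR1, hsufR1, hpresuf⟩ := hR1.exists_split hyR1
  have hbS : b' ∈ S := hR1S b' hR1.getLast_mem
  have hyS : y ∈ S := hR1S y hyR1
  have hb_pre : b' ∉ R1pre := fun h => hyb (hpresuf b' h hsuf.getLast_mem).symm
  have hyR2 : y ∉ R2 := fun h => hyb (hRR y hyR1 h)
  have hca : ∀ z ∈ Q1 ++ R1pre.tail, z ∈ S → z ∈ R1pre := by
    intro z hz hzS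
    rcases List.mem_append.1 hz with hz | hz
    · exact hQ1S z hz hzS ▸ hpre.head_mem
    · exact List.mem_of_mem_tail hz
  have hcb : ∀ z ∈ Q2 ++ R2.tail, z ∈ S → z ∈ R2 := by
    intro z hz hzS
    rcases List.mem_append.1 hz with hz | hz
    · exact hQ2S z hz hzS ▸ hR2.head_mem
    · exact List.mem_of_mem_tail hz
  have hTR1 : ∀ z ∈ T, z ∈ R1 → z = b' ∨ z = y := fun z hz hzR =>
    (em (z = b')).imp id fun h => hTR z hz ⟨.inl hzR, h⟩
  refine ⟨R1suf, T, Q1 ++ R1pre.tail, Q2 ++ R2.tail, ⟨hyb, fun h => hcS (h ▸ hyS),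
    fun h => hcS (h ▸ hbS), hsuf, hT,
    hQ1.append hpre fun w hw hw' => hQ1S w hw (hR1S w (hpreR1.subset hw')),
    hQ2.append hR2 fun w hw hw' => hQ2S w hw (hR2S w hw'), ?_, ?_, ?_, ?_, ?_, ?_⟩⟩
  · exact fun z hz hz' => (hTR1 z hz' (hsufR1.subset hz)).symm
  · intro z hz hz'
    exact hpresuf z (hca z hz' (hR1S z (hsufR1.subset hz))) hz
  · intro z hz hz'
    have hzR1 := hsufR1.subset hz
    exact hRR z hzR1 (hcb z hz' (hR1S z hzR1))
  · intro z hz hz'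
    have hzpre := hca z hz' (hTS z hz)
    exact (hTR1 z hz (hpreR1.subset hzpre)).resolve_left fun h => hb_pre (h ▸ hzpre)
  · intro z hz hz'
    by_contra hzb
    exact hyR2 (hTR z hz ⟨.inr (hcb z hz' (hTS z hz)), hzb⟩ ▸ hcb z hz' (hTS z hz))
  · intro z hz hz'
    by_cases hzS : z ∈ S
    · have hzpre := hca z hz hzS
      exact absurd (hRR z (hpreR1.subset hzpre) (hcb z hz' hzS) ▸ hzpre) hb_pre
    · have hmem {A B : List V} (h : z ∈ A ++ B.tail) (hB : ∀ w ∈ B, w ∈ S) : z ∈ A :=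
        (List.mem_append.1 h).resolve_right fun h' => hzS (hB z (List.mem_of_mem_tail h'))
      exact hQQ z (hmem hz fun w hw => hR1S w (hpreR1.subset hw)) (hmem hz' hR2S)

theorem exists_isW2Paths_of_forced_linkage {D : V → V → Prop} {b' c' x1 x2 : V} (hbc : b' ≠ c')
    (hx12 : x1 ≠ x2) (hx1 : x1 ∈ SComp D b' c') (hx2 : x2 ∈ SComp D b' c') {Q1 Q2 R1 R2 : List V}
    (hQ1 : DipathFromTo (restrict D ({v | v ∉ SComp D b' c'} ∪ {x1, x2})) Q1 c' x1)
    (hQ2 : DipathFromTo (restrict D ({v | v ∉ SComp D b' c'} ∪ {x1, x2})) Q2 c' x2)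
    (hQQ : ∀ z, z ∈ Q1 → z ∈ Q2 → z = c')
    (hR1 : DipathFromTo (restrict D (SComp D b' c')) R1 x1 b')
    (hR2 : DipathFromTo (restrict D (SComp D b' c')) R2 x2 b')
    (hRR : ∀ z, z ∈ R1 → z ∈ R2 → z = b') :
    ∃ a pab pba pca pcb, IsW2Paths D a b' c' pab pba pca pcb := by
  set S := SComp D b' c'
  have hcS : c' ∉ S := notMem_sComp_of_ne hbc
  have hbS : b' ∈ S := self_mem_sComp
  have hQ1S : ∀ z ∈ Q1, z ∈ S → z = x1 := by
    intro z hz hzS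
    rcases hQ1.forall_mem_of_restrict (.inl hcS) z hz with h | rfl | rfl
    · exact absurd hzS h
    · rfl
    · exact absurd (hQQ z hz hQ2.getLast_mem ▸ hzS) hcS
  have hQ2S : ∀ z ∈ Q2, z ∈ S → z = x2 := by
    intro z hz hzS
    rcases hQ2.forall_mem_of_restrict (.inl hcS) z hz with h | rfl | rfl
    · exact absurd hzS h
    · exact absurd (hQQ z hQ1.getLast_mem hz ▸ hzS) hcS
    · rfl
  have hR1S := hR1.forall_mem_of_restrict hx1
  have hR2S := hR2.forall_mem_of_restrict hx2
  obtain ⟨t, htS, ht⟩ : ∃ t ∈ S, (t ∈ R1 ∨ t ∈ R2) ∧ t ≠ b' := by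
    by_cases hx1b : x1 = b'
    · exact ⟨x2, hx2, .inr hR2.head_mem, fun h => hx12 (hx1b.trans h.symm)⟩
    · exact ⟨x1, hx1, .inl hR1.head_mem, hx1b⟩
  obtain ⟨T₀, hT₀⟩ := exists_dipathFromTo_of_reflTransGen (reachIn_sComp hbS htS)
  obtain ⟨y, T, -, hy, hT, -, hTT₀, -, -, hTR⟩ :=
    hT₀.of_restrict.exists_split_first (p := fun z => (z ∈ R1 ∨ z ∈ R2) ∧ z ≠ b')
      ⟨t, hT₀.getLast_mem, ht⟩
  have hTS : ∀ z ∈ T, z ∈ S := fun z hz => hT₀.forall_mem_of_restrict hbS z (hTT₀.subset hz)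
  rcases hy with ⟨hyR1 | hyR2, hyb⟩
  · exact ⟨y, exists_isW2Paths_of_linkage hcS hQ1.of_restrict hQ2.of_restrict hQ1S hQ2S hQQ
      hR1.of_restrict hR2.of_restrict hR1S hR2S hRR hT hTS hyR1 hyb hTR⟩
  · exact ⟨y, exists_isW2Paths_of_linkage hcS hQ2.of_restrict hQ1.of_restrict hQ2S hQ1S
      (fun z hz hz' => hQQ z hz' hz) hR2.of_restrict hR1.of_restrict hR2S hR1S
      (fun z hz hz' => hRR z hz' hz) hT hTS hyR2 hyb fun z hz h => hTR z hz ⟨h.1.symm, h.2⟩⟩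

theorem W2_forced_characterization (D : V → V → Prop) (b' c' : V) (hbc : b' ≠ c') :
    (∃ branch P, IsSubdivisionIn W2 D branch P ∧ branch 1 = b' ∧ branch 2 = c') ↔
    ∃ x1 x2 : V, x1 ≠ x2 ∧ x1 ∈ SComp D b' c' ∧ x2 ∈ SComp D b' c' ∧
      (∃ Q1 Q2 : List V,
        DipathFromTo (restrict D ({v | v ∉ SComp D b' c'} ∪ {x1, x2})) Q1 c' x1 ∧
        DipathFromTo (restrict D ({v | v ∉ SComp D b' c'} ∪ {x1, x2})) Q2 c' x2 ∧
        (∀ z, z ∈ Q1 → z ∈ Q2 → z = c')) ∧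
      (∃ R1 R2 : List V,
        DipathFromTo (restrict D (SComp D b' c')) R1 x1 b' ∧
        DipathFromTo (restrict D (SComp D b' c')) R2 x2 b' ∧
        (∀ z, z ∈ R1 → z ∈ R2 → z = b')) := by
  rw [exists_W2_subdivision_iff]
  constructor
  · rintro ⟨a, pab, pba, pca, pcb, p⟩
    exact p.exists_forced_linkage
  · rintro ⟨x1, x2, hx12, hx1, hx2, ⟨Q1, Q2, hQ1, hQ2, hQQ⟩, ⟨R1, R2, hR1, hR2, hRR⟩⟩
    exact exists_isW2Paths_of_forced_linkage hbc hx12 hx1 hx2 hQ1 hQ2 hQQ hR1 hR2 hRR
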